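/- Let ω = e^{2πi/3}, 𝒜 = [[0,0,1],[1,0,0],[0,1,0]], and ℬ = [[0,1,0],[1,0,0],[0,0,1]]. Let M be a 3×3 complex matrix satisfying M = ω·𝒜M𝒜⁻¹, M = ℬ\overline{M}ℬ (where \overline{M} is the entrywise complex conjugate), and M₁₂ + M₁₃ = 0. Then M₃₃ and (1−ω)M₁₃ are real, and, writing m = M₁₃ (so that \overline{m} = −ω m), the entries of M are M₁₁ = ωM₃₃, M₂₂ = ω²M₃₃, M₁₂ = ω²\overline{m} = −m, M₂₁ = ωm, M₂₃ = \overline{m} = −ωm, M₃₁ = ω\overline{m} = −ω²m, M₃₂ = ω²m. -/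
import Mathlib


/-- ω = e^{2πi/3} -/
noncomputable def ω : ℂ := Complex.exp (2 * Real.pi * Complex.I / 3)

/-- 𝒜 = [[0,0,1],[1,0,0],[0,1,0]]. -/
def Acal : Matrix (Fin 3) (Fin 3) ℂ := !![0, 0, 1; 1, 0, 0; 0, 1, 0]

/-- ℬ = [[0,1,0],[1,0,0],[0,0,1]]. -/
def Bcal : Matrix (Fin 3) (Fin 3) ℂ := !![0, 1, 0; 1, 0, 0; 0, 0, 1]

lemma hω3 : ω ^ 3 = 1 := by
  rw [ω, ← Complex.exp_nat_mul]
  push_cast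
  rw [show (3:ℂ) * (2 * Real.pi * Complex.I / 3) = 2 * Real.pi * Complex.I by ring]
  simpa using Complex.exp_int_mul_two_pi_mul_I 1

lemma hωconj : (starRingEnd ℂ) ω = ω ^ 2 := by
  have h0 : ω ≠ 0 := by rw [ω]; exact Complex.exp_ne_zero _
  have key : (starRingEnd ℂ) ω * ω = 1 := by
    rw [ω, ← Complex.exp_conj, ← Complex.exp_add]
    have : (starRingEnd ℂ) (2 * Real.pi * Complex.I / 3) + 2 * Real.pi * Complex.I / 3 = 0 := by
      rw [map_div₀, map_mul, map_mul, Complex.conj_I, map_ofNat, map_ofNat,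
        Complex.conj_ofReal]
      ring
    rw [this, Complex.exp_zero]
  have h2 : ω ^ 2 * ω = 1 := by linear_combination hω3
  exact mul_right_cancel₀ h0 (key.trans h2.symm)

lemma Ainv : Acal⁻¹ = !![0, 1, 0; 0, 0, 1; 1, 0, 0] := by
  apply Matrix.inv_eq_right_inv
  simp [Acal, Matrix.mul_fin_three, Matrix.one_fin_three]

/-- If a 3×3 complex matrix `M` satisfies `M = ω 𝒜M𝒜⁻¹`, `M = ℬ M̄ ℬ`
and `M₁₂ + M₁₃ = 0`, then `M₃₃` and `(1−ω)M₁₃` are real and, writing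
`m = M₁₃` (so that `m̄ = −ω m`), the entries of `M` are:
`M₁₁ = ωM₃₃`, `M₂₂ = ω²M₃₃`, `M₁₂ = −m`, `M₂₁ = ωm`, `M₂₃ = −ωm`,
`M₃₁ = −ω²m`, `M₃₂ = ω²m`. -/
theorem structure_M2 (M : Matrix (Fin 3) (Fin 3) ℂ)
    (hA : M = ω • (Acal * M * Acal⁻¹))
    (hB : M = Bcal * M.map (starRingEnd ℂ) * Bcal)
    (h : M 0 1 + M 0 2 = 0) :
    (M 2 2).im = 0 ∧ ((1 - ω) * M 0 2).im = 0 ∧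
    (starRingEnd ℂ) (M 0 2) = -ω * M 0 2 ∧
    M 0 0 = ω * M 2 2 ∧ M 1 1 = ω ^ 2 * M 2 2 ∧
    M 0 1 = -(M 0 2) ∧ M 1 0 = ω * M 0 2 ∧ M 1 2 = -ω * M 0 2 ∧
    M 2 0 = -ω ^ 2 * M 0 2 ∧ M 2 1 = ω ^ 2 * M 0 2 := by
  rw [Ainv] at hA
  have a00 := congrFun (congrFun hA 0) 0
  have a02 := congrFun (congrFun hA 0) 2
  have a10 := congrFun (congrFun hA 1) 0
  have a11 := congrFun (congrFun hA 1) 1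
  have a12 := congrFun (congrFun hA 1) 2
  have a20 := congrFun (congrFun hA 2) 0
  have a21 := congrFun (congrFun hA 2) 1
  simp [Acal, Matrix.smul_apply, Matrix.mul_apply, Fin.sum_univ_three, Matrix.vecMul, dotProduct, Matrix.vecHead, Matrix.vecTail] at a00 a02 a10 a11 a12 a20 a21
  have b22 := congrFun (congrFun hB 2) 2
  have b02 := congrFun (congrFun hB 0) 2
  simp [Bcal, Matrix.mul_apply, Fin.sum_univ_three, Matrix.map_apply, Matrix.vecMul, dotProduct] at b22 b02
  have h01 : M 0 1 = -(M 0 2) := by linear_combination h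
  have h12 : M 1 2 = -ω * M 0 2 := by linear_combination a12 + ω * h
  have h21 : M 2 1 = ω ^ 2 * M 0 2 := by linear_combination a21 + ω * a10
  have h20 : M 2 0 = -ω ^ 2 * M 0 2 := by linear_combination a20 + ω * a12 + ω ^ 2 * h
  have h11 : M 1 1 = ω ^ 2 * M 2 2 := by linear_combination a11 + ω * a00
  have hc : (starRingEnd ℂ) (M 0 2) = -ω * M 0 2 := by
    rw [h12] at b02
    rw [map_mul, map_neg, hωconj] at b02
    linear_combination ω * b02 - (starRingEnd ℂ) (M 0 2) * hω3
  have him22 : (M 2 2).im = 0 := Complex.conj_eq_iff_im.mp b22.symm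
  have him02 : ((1 - ω) * M 0 2).im = 0 := by
    apply Complex.conj_eq_iff_im.mp
    rw [map_mul, map_sub, map_one, hωconj, hc]
    linear_combination (M 0 2) * hω3
  exact ⟨him22, him02, hc, a00, h11, h01, a10, h12, h20, h21⟩
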